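/- arXiv:1908.08502 — 2 statements merged into one kernel-verified Lean document; each statement's English description precedes it below -/
import Mathlib

section
/- Let λ be a partition of length at most n, let T ∈ SSYT_n(λ), and let 1 ≤ j ≤ n. Then 𝔻(RSK(T, j)) = rectify(𝔻(T) ∪ {(λ_1 + 1, n + 1 − j)}). -/
attribute [local instance] Classical.propDecidable

/-- A diagram: a set of cells `(column, row)` with positive coordinates. -/
abbrev Diagram : Type := Set (ℕ × ℕ)

/-- The key diagram of a weak composition `a` (parts indexed from 1). -/
def keyDiagram (a : ℕ → ℕ) : Diagram := {p | 1 ≤ p.1 ∧ 1 ≤ p.2 ∧ p.1 ≤ a p.2}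

/-- A single Kohnert move: the rightmost cell of some row drops within its column to
the first unoccupied position below it. -/
def KohnertMove (T S : Diagram) : Prop :=
  ∃ c r r', (c, r) ∈ T ∧ (∀ c', (c', r) ∈ T → c' ≤ c) ∧
    1 ≤ r' ∧ r' < r ∧ (c, r') ∉ T ∧ (∀ s, r' < s → s < r → (c, s) ∈ T) ∧
    S = insert (c, r') (T \ {(c, r)})

/-- The set of Kohnert diagrams of a weak composition. -/
def KD (a : ℕ → ℕ) : Set Diagram :=
  {T | Relation.ReflTransGen KohnertMove (keyDiagram a) T}

/-- Row weight: the number of cells in each row. -/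
noncomputable def rowWeight (T : Diagram) : ℕ → ℕ :=
  fun r => {p : ℕ × ℕ | p ∈ T ∧ p.2 = r}.ncard

/-- Column weight: the number of cells in each column. -/
noncomputable def colWeight (T : Diagram) : ℕ → ℕ :=
  fun c => {p : ℕ × ℕ | p ∈ T ∧ p.1 = c}.ncard

/-- The weak composition with a single part `1` in position `j`. -/
def eComp (j : ℕ) : ℕ → ℕ := fun i => if i = j then 1 else 0

/-- Exchange parts `i` and `j` of a weak composition. -/
def swapParts (a : ℕ → ℕ) (i j : ℕ) : ℕ → ℕ :=
  fun t => if t = i then a j else if t = j then a i else a t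

/-- A single left swap: exchange two parts `a i < a j` with `i < j`. -/
def LSwapStep (a b : ℕ → ℕ) : Prop :=
  ∃ i j, 1 ≤ i ∧ i < j ∧ a i < a j ∧ b = swapParts a i j

/-- Left swap order: `b ⪯ a`. -/
def LswapLE (b a : ℕ → ℕ) : Prop := Relation.ReflTransGen LSwapStep a b

/-- A generic Kohnert diagram: a Kohnert diagram of some weak composition. -/
def GenericKD (T : Diagram) : Prop :=
  ∃ a : ℕ → ℕ, (∃ n, ∀ i, n < i → a i = 0) ∧ T ∈ KD a

/-- The target space `D(a,k)`: union of `KD (b + e j)` over `b ⪯ a` and `1 ≤ j ≤ k`. -/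
def Dset (a : ℕ → ℕ) (k : ℕ) : Set Diagram :=
  {T | ∃ b j, LswapLE b a ∧ 1 ≤ j ∧ j ≤ k ∧ T ∈ KD (b + eComp j)}

/-- `(c,r)` is an addable cell for `a`. -/
def Addable (a : ℕ → ℕ) (c r : ℕ) : Prop :=
  1 ≤ c ∧ 1 ≤ r ∧ a r < c ∧ ∃ s, r ≤ s ∧ a s = c - 1

/-- `(c,r)` is a `k`-addable cell for `a`. -/
def KAddable (a : ℕ → ℕ) (k c r : ℕ) : Prop :=
  1 ≤ c ∧ 1 ≤ r ∧ r ≤ k ∧ a r < c ∧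
    (a r < c - 1 → ∃ l, k < l ∧ a l = c - 1) ∧
    (∀ i, r < i → i ≤ k → a i < a r ∨ c ≤ a i)

/-- Apply the transpositions `t_{r0,r1} t_{r1,r2} ⋯` (rightmost first) to `a`. -/
def applyTranspositions (a : ℕ → ℕ) : List ℕ → (ℕ → ℕ)
  | [] => a
  | [_] => a
  | r0 :: r1 :: rest => swapParts (applyTranspositions a (r1 :: rest)) r0 r1

/-- The increasing chain of row indices `r = r₀ < r₁ < ⋯ < r_q` used to construct
the maximal support composition for `a` at `(c,r)`: at each step, the next index is
the first position carrying the smallest part exceeding the current one and at most `c-1`. -/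
noncomputable def suppChain (a : ℕ → ℕ) (c : ℕ) : ℕ → ℕ → List ℕ
  | 0, r => [r]
  | fuel + 1, r =>
    if (∃ s, r < s ∧ a r < a s ∧ a s ≤ c - 1) then
      r :: suppChain a c fuel (sInf {s | r < s ∧ a r < a s ∧ a s ≤ c - 1})
    else [r]

/-- The maximal support composition for `a` at `(c,r)`. -/
noncomputable def suppComp (a : ℕ → ℕ) (c r : ℕ) : ℕ → ℕ :=
  applyTranspositions a (suppChain a c c r)

/-- The maximal drop composition for `a` in column `c` at the set of rows `R`. -/
noncomputable def dropComp (a : ℕ → ℕ) (c : ℕ) (R : Finset ℕ) : ℕ → ℕ :=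
  applyTranspositions (suppComp a c (sSup (R : Set ℕ))) (R.sort (· ≤ ·))

/-- The key polynomial of a weak composition. -/
noncomputable def keyPoly (a : ℕ → ℕ) : MvPolynomial ℕ ℤ :=
  ∑ᶠ T ∈ KD a, ∏ᶠ i : ℕ, (MvPolynomial.X i : MvPolynomial ℕ ℤ) ^ rowWeight T i

/-- A matching sequence on a diagram `T`: edges `(x, y)` mean `x` (in column `i+1`)
matches to `y` (in column `i`, weakly higher row); every cell outside column 1 is matched,
sources and targets are unique. -/
def IsMatchingSeq (T : Diagram) (M : Set ((ℕ × ℕ) × (ℕ × ℕ))) : Prop :=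
  (∀ p ∈ M, p.1 ∈ T ∧ p.2 ∈ T ∧ 2 ≤ p.1.1 ∧ p.2.1 + 1 = p.1.1 ∧ p.1.2 ≤ p.2.2) ∧
  (∀ x y y' : ℕ × ℕ, (x, y) ∈ M → (x, y') ∈ M → y = y') ∧
  (∀ x x' y : ℕ × ℕ, (x, y) ∈ M → (x', y) ∈ M → x = x') ∧
  (∀ x ∈ T, 2 ≤ x.1 → ∃ y, (x, y) ∈ M)

/-- The anchor weight of a matching sequence: its `i`-th part is the number of cells
on the path of `M` terminating at the column-1 cell in row `i`. -/
noncomputable def anchorWeight (T : Diagram) (M : Set ((ℕ × ℕ) × (ℕ × ℕ))) : ℕ → ℕ :=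
  fun i =>
    {x : ℕ × ℕ | x ∈ T ∧ Relation.ReflTransGen (fun u v => (u, v) ∈ M) x (1, i)}.ncard

/-- `m_T(c,r)`. -/
noncomputable def mval (T : Diagram) (c r : ℕ) : ℤ :=
  ({p : ℕ × ℕ | p ∈ T ∧ p.1 = c - 1 ∧ r ≤ p.2}.ncard : ℤ) -
    ({p : ℕ × ℕ | p ∈ T ∧ p.1 = c ∧ r ≤ p.2}.ncard : ℤ)

/-- One rectification step. -/
noncomputable def rho (T : Diagram) : Diagram :=
  if ∀ c r, 1 < c → 1 ≤ r → 0 ≤ mval T c r then T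
  else
    let c := sInf {c | 1 < c ∧ ∃ r, 1 ≤ r ∧ mval T c r < 0}
    let r := sSup {r | 1 ≤ r ∧ ∀ r', 1 ≤ r' → mval T c r ≤ mval T c r'}
    insert (c - 1, r) (T \ {(c, r)})

/-- Rectification: iterate `rho` until it stabilizes. -/
noncomputable def rectify (T : Diagram) : Diagram :=
  if h : ∃ m, rho^[m + 1] T = rho^[m] T then rho^[h.choose] T else T

/-- Bottom insertion `Δ₁`: add a cell at the leftmost empty position of row 1. -/
noncomputable def bottomInsert (T : Diagram) : Diagram :=
  insert (sInf {i | 1 ≤ i ∧ (i, 1) ∉ T}, 1) T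

/-- Top insertion `Δ∞`: add a cell in row `j` beyond the last occupied column
and rectify. -/
noncomputable def topInsert (T : Diagram) (j : ℕ) : Diagram :=
  rectify (insert (sSup {c | ∃ r, (c, r) ∈ T} + 1, j) T)

/-- `x` is a removable cell of `T`. -/
def Removable (T : Diagram) (x : ℕ × ℕ) : Prop := x ∈ T ∧ GenericKD (T \ {x})

/-- A weak Kohnert diagram: a diagram with a removable cell. -/
def WeakKD (T : Diagram) : Prop := ∃ x, Removable T x

/-- `c` is a removable column of `T`. -/
def IsRemovableCol (T : Diagram) (c : ℕ) : Prop := ∃ x, Removable T x ∧ x.1 = c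

/-- The cells of the thread of `S` starting at the cell in column `j` and row `r`. -/
noncomputable def threadCells (S : Diagram) : ℕ → ℕ → Diagram
  | 0, _ => ∅
  | j + 1, r =>
    insert (j + 1, r)
      (if (∃ s, r ≤ s ∧ (j, s) ∈ S) then
        threadCells S j (sInf {s | r ≤ s ∧ (j, s) ∈ S})
      else ∅)

/-- Extract the first thread of `S`: start at the lowest cell of the rightmost column. -/
noncomputable def extractThread (S : Diagram) : Diagram :=
  threadCells S (sSup {c | ∃ r, (c, r) ∈ S})
    (sInf {r | (sSup {c | ∃ r', (c, r') ∈ S}, r) ∈ S})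

/-- The list of threads of the thread decomposition (with fuel). -/
noncomputable def threadList : ℕ → Diagram → List Diagram
  | 0, _ => []
  | fuel + 1, S =>
    if S = ∅ then [] else extractThread S :: threadList fuel (S \ extractThread S)

/-- The thread weight `θ(T)`: its `i`-th part is the number of cells of the thread
whose column-1 cell lies in row `i`. -/
noncomputable def threadWeight (T : Diagram) : ℕ → ℕ :=
  fun i => ∑ᶠ th ∈ {th : Diagram | th ∈ threadList T.ncard T ∧ (1, i) ∈ th}, th.ncard

/-- The target space `D^(m)(a,k)`. -/
def DsetM (a : ℕ → ℕ) (k m : ℕ) : Set Diagram :=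
  {T | ∃ (bs : ℕ → ℕ → ℕ) (js : ℕ → ℕ),
      LswapLE (bs 0) a ∧
      (∀ i, 1 ≤ i → i ≤ m → 1 ≤ js i ∧ js i ≤ k ∧
        LswapLE (bs i) (bs (i - 1) + eComp (js i))) ∧
      (∀ i i', 1 ≤ i → i < i' → i' ≤ m → bs i (js i) ≠ bs i' (js i')) ∧
      T ∈ KD (bs m)}

/-- The sum of all monomials of degree `m` in `x_1, …, x_k`. -/
noncomputable def hPoly (k m : ℕ) : MvPolynomial ℕ ℤ :=
  ∑ s ∈ (Finset.Icc 1 k).sym m, (Multiset.map MvPolynomial.X s.val).prod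

/-- Semistandard Young tableaux of shape `lam` with entries in `{1, …, n}`,
encoded as `f row col = entry` (0 outside the shape, rows/columns indexed from 1). -/
def IsSSYT (n : ℕ) (lam : ℕ → ℕ) (f : ℕ → ℕ → ℕ) : Prop :=
  (∀ i c, f i c ≠ 0 ↔ (1 ≤ i ∧ 1 ≤ c ∧ c ≤ lam i)) ∧
  (∀ i c, f i c ≤ n) ∧
  (∀ i c, 1 ≤ i → 1 ≤ c → c + 1 ≤ lam i → f i c ≤ f i (c + 1)) ∧
  (∀ i c, 1 ≤ i → 1 ≤ c → c ≤ lam (i + 1) → f i c < f (i + 1) c)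

/-- The column of row `i` at which `x` is inserted by RSK row insertion. -/
noncomputable def bumpCol (f : ℕ → ℕ → ℕ) (i x : ℕ) : ℕ :=
  sInf {c | 1 ≤ c ∧ (f i c = 0 ∨ x < f i c)}

/-- RSK row insertion, with fuel. -/
noncomputable def rskAux : ℕ → (ℕ → ℕ → ℕ) → ℕ → ℕ → (ℕ → ℕ → ℕ)
  | 0, f, _, _ => f
  | fuel + 1, f, i, x =>
    let c := bumpCol f i x
    let y := f i c
    let f' : ℕ → ℕ → ℕ := fun i' c' => if i' = i ∧ c' = c then x else f i' c'
    if y = 0 then f' else rskAux fuel f' (i + 1) y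

/-- RSK row insertion of the entry `x` into a tableau with entries at most `n`. -/
noncomputable def RSKinsert (n : ℕ) (f : ℕ → ℕ → ℕ) (x : ℕ) : ℕ → ℕ → ℕ :=
  rskAux (n + 1) f 1 x

/-- The map `𝔻`: the tableau cell in column `c` with entry `v` becomes the diagram
cell `(c, n + 1 - v)`. -/
def toDiagram (n : ℕ) (f : ℕ → ℕ → ℕ) : Diagram :=
  {p | ∃ i, 1 ≤ i ∧ f i p.1 ≠ 0 ∧ p.2 + f i p.1 = n + 1}

/-!
While `x` waits to be inserted into row `i` of the current tableau `g`, keep the diagram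
`𝔻(g) ∪ {(d, n + 1 - x)}`, with the cell of `x` "floating" in column `d`; initially
`d = λ₁ + 1`. Columns of `𝔻(g)` alone satisfy `m ≥ 0`. While `d` exceeds the column `b` where
`x` lands in row `i`, columns `d - 1` and `d` of `g` have equally many entries `≤ x`, so the
first negative value of `m` is `-1` at `(d, n + 1 - x)` and `ρ` slides the floating cell one
column left. At `d = b`, either the position is empty, and the diagram is `𝔻` of the new
tableau, fixed by `ρ`; or `x` bumps `y`, and the same diagram reads as `𝔻` of the new tableau
with the cell of `y` floating in column `b`, waiting to enter row `i + 1`.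
-/

def colCells (T : Diagram) (c r : ℕ) : Set (ℕ × ℕ) := {p | p ∈ T ∧ p.1 = c ∧ r ≤ p.2}

section Diagram

variable {T : Diagram} {q : ℕ × ℕ} {c r : ℕ}

theorem mval_eq_ncard_sub (T : Diagram) (c r : ℕ) :
    mval T c r = ((colCells T (c - 1) r).ncard : ℤ) - (colCells T c r).ncard := rfl

theorem colCells_insert_of_not (hq : ¬(q.1 = c ∧ r ≤ q.2)) :
    colCells (insert q T) c r = colCells T c r := by
  ext p
  simp only [colCells, Set.mem_insert_iff, Set.mem_ofPred_eq]
  constructor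
  · rintro ⟨rfl | hp, hc, hr⟩
    exacts [absurd ⟨hc, hr⟩ hq, ⟨hp, hc, hr⟩]
  · exact fun ⟨hp, hc, hr⟩ => ⟨Or.inr hp, hc, hr⟩

theorem colCells_insert_of (hc : q.1 = c) (hr : r ≤ q.2) :
    colCells (insert q T) c r = insert q (colCells T c r) := by
  ext p
  simp only [colCells, Set.mem_insert_iff, Set.mem_ofPred_eq]
  constructor
  · rintro ⟨rfl | hp, hc, hr⟩
    exacts [Or.inl rfl, Or.inr ⟨hp, hc, hr⟩]
  · rintro (rfl | ⟨hp, hc, hr⟩)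
    exacts [⟨Or.inl rfl, hc, hr⟩, ⟨Or.inr hp, hc, hr⟩]

theorem mval_le_mval_insert (hT : T.Finite) (hc : q.1 ≠ c) :
    mval T c r ≤ mval (insert q T) c r := by
  have hsub : colCells T (c - 1) r ⊆ colCells (insert q T) (c - 1) r :=
    fun p ⟨hp, hpc, hpr⟩ => ⟨Or.inr hp, hpc, hpr⟩
  have hfin : (colCells (insert q T) (c - 1) r).Finite :=
    (hT.insert q).subset fun p hp => hp.1
  rw [mval_eq_ncard_sub, mval_eq_ncard_sub, colCells_insert_of_not (c := c) (by tauto)]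
  have := Set.ncard_le_ncard hsub hfin
  omega

theorem mval_insert_self (hT : T.Finite) (hq : q ∉ T) (hq1 : 1 ≤ q.1) (r : ℕ) :
    mval (insert q T) q.1 r = mval T q.1 r - if r ≤ q.2 then 1 else 0 := by
  rw [mval_eq_ncard_sub, mval_eq_ncard_sub, colCells_insert_of_not (by omega)]
  split_ifs with hr
  · rw [colCells_insert_of rfl hr,
      Set.ncard_insert_of_notMem (fun h => hq h.1) (hT.subset fun p hp => hp.1)]
    push_cast
    ring
  · rw [colCells_insert_of_not (by tauto)]
    ring

theorem rho_eq_self (H : ∀ c r, 1 < c → 1 ≤ r → 0 ≤ mval T c r) : rho T = T := if_pos H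

theorem rho_eq_of_first_neg (hc : 1 < c) (hr : 1 ≤ r)
    (hneg : mval T c r < 0) (hleft : ∀ c' r', 1 < c' → c' < c → 1 ≤ r' → 0 ≤ mval T c' r')
    (hmin : ∀ r', 1 ≤ r' → mval T c r ≤ mval T c r')
    (hhigh : ∀ r', r < r' → mval T c r < mval T c r') :
    rho T = insert (c - 1, r) (T \ {(c, r)}) := by
  have hcol : sInf {c | 1 < c ∧ ∃ r, 1 ≤ r ∧ mval T c r < 0} = c := by
    refine le_antisymm (Nat.sInf_le ⟨hc, r, hr, hneg⟩) (le_csInf ⟨c, hc, r, hr, hneg⟩ ?_)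
    rintro c' ⟨hc', r', hr1, hr'⟩
    by_contra! hlt
    exact (hleft c' r' hc' hlt hr1).not_gt hr'
  have hrow : sSup {r' | 1 ≤ r' ∧ ∀ r'', 1 ≤ r'' → mval T c r' ≤ mval T c r''} = r := by
    have hbdd : ∀ r' ∈ {r' | 1 ≤ r' ∧ ∀ r'', 1 ≤ r'' → mval T c r' ≤ mval T c r''}, r' ≤ r :=
      fun r' ⟨_, hr'⟩ => by
        by_contra! hlt
        exact (hr' r hr).not_gt (hhigh r' hlt)
    exact le_antisymm (csSup_le ⟨r, hr, hmin⟩ hbdd) (le_csSup ⟨r, hbdd⟩ ⟨hr, hmin⟩)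
  have hnot : ¬∀ c r, 1 < c → 1 ≤ r → 0 ≤ mval T c r := fun H => (H c r hc hr).not_gt hneg
  simp only [rho, if_neg hnot, hcol, hrow]

theorem rectify_eq_of_iterate {Z : Diagram} {k : ℕ} (hk : rho^[k] T = Z) (hZ : rho Z = Z) :
    rectify T = Z := by
  have hex : ∃ m, rho^[m + 1] T = rho^[m] T :=
    ⟨k, by rw [Function.iterate_succ_apply', hk, hZ]⟩
  have hm : rho (rho^[hex.choose] T) = rho^[hex.choose] T := by
    simpa only [Function.iterate_succ_apply'] using hex.choose_spec
  rw [rectify, dif_pos hex]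
  calc rho^[hex.choose] T = rho^[k] (rho^[hex.choose] T) := (Function.iterate_fixed hm k).symm
    _ = rho^[hex.choose] (rho^[k] T) := by
      rw [← Function.iterate_add_apply, add_comm, Function.iterate_add_apply]
    _ = Z := by rw [hk, Function.iterate_fixed hZ]

end Diagram

def setEntry (g : ℕ → ℕ → ℕ) (i c x : ℕ) : ℕ → ℕ → ℕ :=
  fun i' c' => if i' = i ∧ c' = c then x else g i' c'

theorem rskAux_succ (fuel : ℕ) (g : ℕ → ℕ → ℕ) (i x : ℕ) :
    rskAux (fuel + 1) g i x =
      if g i (bumpCol g i x) = 0 then setEntry g i (bumpCol g i x) x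
      else rskAux fuel (setEntry g i (bumpCol g i x) x) (i + 1) (g i (bumpCol g i x)) :=
  rfl

theorem IsSSYT.setEntry {n : ℕ} {μ : ℕ → ℕ} {g : ℕ → ℕ → ℕ} {i d x : ℕ} (h : IsSSYT n μ g)
    (hin : g i d ≠ 0) (hx : 1 ≤ x) (hxn : x ≤ n)
    (hleft : ∀ c, 1 ≤ c → c + 1 = d → g i c ≤ x) (hright : d + 1 ≤ μ i → x ≤ g i (d + 1))
    (hup : ∀ i', 1 ≤ i' → i' + 1 = i → g i' d < x) (hdown : d ≤ μ (i + 1) → x < g (i + 1) d) :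
    IsSSYT n μ (setEntry g i d x) := by
  obtain ⟨hshape, hle, hrow, hcol⟩ := h
  refine ⟨fun i' c => ?_, fun i' c => ?_, fun i' c hi hc hcμ => ?_, fun i' c hi hc hcμ => ?_⟩ <;>
    simp only [_root_.setEntry]
  · split_ifs with hic
    · obtain ⟨rfl, rfl⟩ := hic
      exact ⟨fun _ => (hshape i' c).mp hin, fun _ => by omega⟩
    · exact hshape i' c
  · split_ifs
    exacts [hxn, hle i' c]
  · split_ifs with h₁ h₂ h₂
    · omega
    · obtain ⟨rfl, rfl⟩ := h₁
      exact hright hcμ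
    · obtain ⟨rfl, hcd⟩ := h₂
      exact hleft c hc hcd
    · exact hrow i' c hi hc hcμ
  · split_ifs with h₁ h₂ h₂
    · omega
    · obtain ⟨rfl, rfl⟩ := h₁
      exact hdown hcμ
    · obtain ⟨hii, rfl⟩ := h₂
      exact hup i' hi hii
    · exact hcol i' c hi hc hcμ

theorem bumpCol_le {g : ℕ → ℕ → ℕ} {i x c : ℕ} (hc : 1 ≤ c) (hgc : g i c = 0 ∨ x < g i c) :
    bumpCol g i x ≤ c :=
  Nat.sInf_le ⟨hc, hgc⟩

theorem ne_zero_and_le_of_lt_bumpCol {g : ℕ → ℕ → ℕ} {i x c : ℕ} (hc : 1 ≤ c)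
    (hcb : c < bumpCol g i x) : g i c ≠ 0 ∧ g i c ≤ x := by
  by_contra! H
  have := bumpCol_le (g := g) (i := i) (x := x) hc (by omega)
  omega

def smallRows (g : ℕ → ℕ → ℕ) (c w : ℕ) : Set ℕ := {i | 1 ≤ i ∧ g i c ≠ 0 ∧ g i c ≤ w}

structure IsPartitionSSYT (n : ℕ) (μ : ℕ → ℕ) (g : ℕ → ℕ → ℕ) : Prop where
  shape_succ_le : ∀ i, 1 ≤ i → μ (i + 1) ≤ μ i
  shape_eq_zero : ∀ i, n < i → μ i = 0
  ssyt : IsSSYT n μ g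

namespace IsPartitionSSYT

variable {n : ℕ} {μ : ℕ → ℕ} {g : ℕ → ℕ → ℕ}

theorem ne_zero_iff (h : IsPartitionSSYT n μ g) {i c : ℕ} :
    g i c ≠ 0 ↔ 1 ≤ i ∧ 1 ≤ c ∧ c ≤ μ i :=
  h.ssyt.1 i c

theorem eq_zero_of_shape_lt (h : IsPartitionSSYT n μ g) {i c : ℕ} (hc : μ i < c) : g i c = 0 := by
  by_contra hne
  have := h.ne_zero_iff.mp hne
  omega

theorem apply_le (h : IsPartitionSSYT n μ g) (i c : ℕ) : g i c ≤ n := h.ssyt.2.1 i c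

theorem shape_anti (h : IsPartitionSSYT n μ g) {i i' : ℕ} (hi : 1 ≤ i) (hii' : i ≤ i') :
    μ i' ≤ μ i := by
  induction i', hii' using Nat.le_induction with
  | base => exact le_rfl
  | succ k hk ih => exact (h.shape_succ_le k (by omega)).trans ih

theorem ne_zero_of_le (h : IsPartitionSSYT n μ g) {i i' c c' : ℕ} (hne : g i' c' ≠ 0)
    (hi : 1 ≤ i) (hii' : i ≤ i') (hc : 1 ≤ c) (hcc' : c ≤ c') : g i c ≠ 0 := by
  obtain ⟨-, -, hc'⟩ := h.ne_zero_iff.mp hne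
  exact h.ne_zero_iff.mpr ⟨hi, hc, (hcc'.trans hc').trans (h.shape_anti hi hii')⟩

theorem row_le (h : IsPartitionSSYT n μ g) {i c : ℕ} (hne : g i c ≠ 0) : i ≤ n := by
  by_contra! hi
  have := h.shape_eq_zero i hi
  have := h.ne_zero_iff.mp hne
  omega

theorem le_of_col_le (h : IsPartitionSSYT n μ g) {i c c' : ℕ} (hc : 1 ≤ c) (hcc' : c ≤ c')
    (hne : g i c' ≠ 0) : g i c ≤ g i c' := by
  induction c', hcc' using Nat.le_induction with
  | base => exact le_rfl
  | succ k hk ih =>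
    obtain ⟨hi, -, hk1⟩ := h.ne_zero_iff.mp hne
    have hk0 : g i k ≠ 0 := h.ne_zero_of_le hne hi le_rfl (by omega) (by omega)
    exact (ih hk0).trans (h.ssyt.2.2.1 i k hi (by omega) hk1)

theorem lt_of_row_lt (h : IsPartitionSSYT n μ g) {i i' c : ℕ} (hi : 1 ≤ i) (hii' : i < i')
    (hne : g i' c ≠ 0) : g i c < g i' c := by
  induction i', hii' using Nat.le_induction with
  | base =>
    obtain ⟨-, hc, hcμ⟩ := h.ne_zero_iff.mp hne
    exact h.ssyt.2.2.2 i c hi hc hcμ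
  | succ k hk ih =>
    obtain ⟨-, hc, hcμ⟩ := h.ne_zero_iff.mp hne
    have hk0 : g k c ≠ 0 := h.ne_zero_of_le hne (by omega) (by omega) hc le_rfl
    exact (ih hk0).trans (h.ssyt.2.2.2 k c (by omega) hc hcμ)

theorem finite_smallRows (h : IsPartitionSSYT n μ g) (c w : ℕ) : (smallRows g c w).Finite :=
  (Set.finite_Icc 1 n).subset fun _ ⟨hi, hne, _⟩ => ⟨hi, h.row_le hne⟩

theorem smallRows_subset_pred (h : IsPartitionSSYT n μ g) {c : ℕ} (hc : 2 ≤ c) (w : ℕ) :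
    smallRows g c w ⊆ smallRows g (c - 1) w := fun i ⟨hi, hne, hw⟩ =>
  ⟨hi, h.ne_zero_of_le hne hi le_rfl (by omega) (by omega),
    (h.le_of_col_le (by omega) (by omega) hne).trans hw⟩

theorem finite_toDiagram (h : IsPartitionSSYT n μ g) : (toDiagram n g).Finite := by
  refine ((Set.finite_Icc 1 (μ 1)).prod (Set.finite_Icc 1 n)).subset ?_
  rintro ⟨c, r⟩ ⟨i, hi, hne, hsum⟩
  dsimp only at hne hsum
  obtain ⟨-, hc, hcμ⟩ := h.ne_zero_iff.mp hne
  have := h.apply_le i c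
  exact ⟨⟨hc, hcμ.trans (h.shape_anti le_rfl hi)⟩, by omega, by omega⟩

theorem colCells_toDiagram (h : IsPartitionSSYT n μ g) (c r : ℕ) :
    colCells (toDiagram n g) c r = (fun i => (c, n + 1 - g i c)) '' smallRows g c (n + 1 - r) := by
  ext ⟨c', r'⟩
  simp only [colCells, toDiagram, smallRows, Set.mem_image, Set.mem_ofPred_eq, Prod.mk.injEq]
  constructor
  · rintro ⟨⟨i, hi, hne, hsum⟩, rfl, hr⟩
    have := h.apply_le i c'
    exact ⟨i, ⟨hi, hne, by omega⟩, rfl, by omega⟩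
  · rintro ⟨i, ⟨hi, hne, hw⟩, rfl, rfl⟩
    have := h.apply_le i c
    exact ⟨⟨i, hi, hne, by omega⟩, rfl, by omega⟩

theorem ncard_colCells_toDiagram (h : IsPartitionSSYT n μ g) (c r : ℕ) :
    (colCells (toDiagram n g) c r).ncard = (smallRows g c (n + 1 - r)).ncard := by
  rw [colCells_toDiagram h]
  refine Set.InjOn.ncard_image fun i₁ ⟨hi₁, hne₁, _⟩ i₂ ⟨hi₂, hne₂, _⟩ heq => ?_
  have := h.apply_le i₁ c
  have := h.apply_le i₂ c
  simp only [Prod.mk.injEq] at heq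
  by_contra hne
  rcases Nat.lt_or_gt_of_ne hne with hlt | hlt
  · have := h.lt_of_row_lt hi₁ hlt hne₂; omega
  · have := h.lt_of_row_lt hi₂ hlt hne₁; omega

theorem mval_toDiagram (h : IsPartitionSSYT n μ g) (c r : ℕ) :
    mval (toDiagram n g) c r =
      ((smallRows g (c - 1) (n + 1 - r)).ncard : ℤ) - (smallRows g c (n + 1 - r)).ncard := by
  rw [mval_eq_ncard_sub, h.ncard_colCells_toDiagram, h.ncard_colCells_toDiagram]

theorem mval_toDiagram_nonneg (h : IsPartitionSSYT n μ g) {c : ℕ} (hc : 1 < c) (r : ℕ) :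
    0 ≤ mval (toDiagram n g) c r := by
  rw [h.mval_toDiagram, sub_nonneg, Nat.cast_le]
  exact Set.ncard_le_ncard (h.smallRows_subset_pred hc _) (h.finite_smallRows _ _)

theorem bumpCol_spec (h : IsPartitionSSYT n μ g) (i x : ℕ) :
    1 ≤ bumpCol g i x ∧ (g i (bumpCol g i x) = 0 ∨ x < g i (bumpCol g i x)) :=
  Nat.sInf_mem (s := {c | 1 ≤ c ∧ (g i c = 0 ∨ x < g i c)})
    ⟨μ i + 1, by omega, .inl (h.eq_zero_of_shape_lt (by omega))⟩

theorem lt_of_bumpCol_ne_zero (h : IsPartitionSSYT n μ g) {i x : ℕ}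
    (hy : g i (bumpCol g i x) ≠ 0) : x < g i (bumpCol g i x) :=
  (h.bumpCol_spec i x).2.resolve_left hy

theorem eq_zero_or_lt_of_bumpCol_le (h : IsPartitionSSYT n μ g) {i x c : ℕ}
    (hbc : bumpCol g i x ≤ c) : g i c = 0 ∨ x < g i c := by
  obtain ⟨hb, hgb⟩ := h.bumpCol_spec i x
  by_cases hc : g i c = 0
  · exact Or.inl hc
  · have hb0 : g i (bumpCol g i x) ≠ 0 :=
      h.ne_zero_of_le hc (h.ne_zero_iff.mp hc).1 le_rfl hb hbc
    have := h.le_of_col_le hb hbc hc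
    omega

end IsPartitionSSYT

def floatDiagram (n : ℕ) (g : ℕ → ℕ → ℕ) (x d : ℕ) : Diagram :=
  insert (d, n + 1 - x) (toDiagram n g)

section

variable {n : ℕ} {g : ℕ → ℕ → ℕ} {i d x : ℕ}

theorem floatDiagram_eq_toDiagram_setEntry (hi : 1 ≤ i) (hx : 1 ≤ x) (hxn : x ≤ n)
    (hy : g i d = 0) : floatDiagram n g x d = toDiagram n (setEntry g i d x) := by
  ext ⟨c, r⟩
  simp only [floatDiagram, toDiagram, setEntry, Set.mem_insert_iff, Set.mem_ofPred_eq,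
    Prod.mk.injEq]
  grind

theorem floatDiagram_eq_floatDiagram_setEntry (hi : 1 ≤ i) (hx : 1 ≤ x) (hxn : x ≤ n)
    (hy : g i d ≠ 0) (hyn : g i d ≤ n) :
    floatDiagram n g x d = floatDiagram n (setEntry g i d x) (g i d) d := by
  ext ⟨c, r⟩
  simp only [floatDiagram, toDiagram, setEntry, Set.mem_insert_iff, Set.mem_ofPred_eq,
    Prod.mk.injEq]
  grind

end

/-- Row insertion in progress: `x` is still to be inserted into row `i` of `g`, and the
diagram cell standing for `x` currently sits in column `d` of `floatDiagram n g x d`. -/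
structure IsInsertionState (n : ℕ) (μ : ℕ → ℕ) (g : ℕ → ℕ → ℕ) (i x d : ℕ) : Prop
    extends IsPartitionSSYT n μ g where
  one_le_row : 1 ≤ i
  one_le_entry : 1 ≤ x
  entry_le : x ≤ n
  bumpCol_le_col : bumpCol g i x ≤ d
  col_le_shape_pred : 2 ≤ i → d ≤ μ (i - 1)
  lt_of_above : ∀ i' c, 1 ≤ i' → i' < i → 1 ≤ c → c ≤ d → g i' c ≠ 0 → g i' c < x

namespace IsInsertionState

variable {n : ℕ} {μ : ℕ → ℕ} {g : ℕ → ℕ → ℕ} {i x d : ℕ}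

theorem one_le_col (hI : IsInsertionState n μ g i x d) : 1 ≤ d :=
  (hI.bumpCol_spec i x).1.trans hI.bumpCol_le_col

theorem of_le (hI : IsInsertionState n μ g i x d) {d' : ℕ} (hbd' : bumpCol g i x ≤ d')
    (hd'd : d' ≤ d) : IsInsertionState n μ g i x d' :=
  { hI with
    bumpCol_le_col := hbd'
    col_le_shape_pred := fun hi => hd'd.trans (hI.col_le_shape_pred hi)
    lt_of_above := fun i' c hi' hi'i hc hcd' =>
      hI.lt_of_above i' c hi' hi'i hc (hcd'.trans hd'd) }

theorem not_mem_toDiagram (hI : IsInsertionState n μ g i x d) :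
    (d, n + 1 - x) ∉ toDiagram n g := by
  rintro ⟨i', hi', hne, hsum⟩
  dsimp only at hne hsum
  have := hI.apply_le i' d
  have hx := hI.entry_le
  have hrow := hI.eq_zero_or_lt_of_bumpCol_le hI.bumpCol_le_col
  rcases lt_trichotomy i' i with hlt | rfl | hgt
  · have := hI.lt_of_above i' d hi' hlt hI.one_le_col le_rfl hne
    omega
  · omega
  · have := hI.lt_of_row_lt hI.one_le_row hgt hne
    have := hI.ne_zero_of_le hne hI.one_le_row hgt.le hI.one_le_col le_rfl
    omega

theorem smallRows_pred_eq (hI : IsInsertionState n μ g i x d) (hlt : bumpCol g i x < d) :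
    smallRows g (d - 1) x = smallRows g d x := by
  have hb := (hI.bumpCol_spec i x).1
  refine subset_antisymm (fun i' ⟨hi', hne, hle⟩ => ?_) (hI.smallRows_subset_pred (by omega) x)
  have hrow := hI.eq_zero_or_lt_of_bumpCol_le (show bumpCol g i x ≤ d - 1 by omega)
  have hi'i : i' < i := by
    rcases lt_trichotomy i' i with hlt | rfl | hgt
    · exact hlt
    · omega
    · have := hI.lt_of_row_lt hI.one_le_row hgt hne
      have := hI.ne_zero_of_le hne hI.one_le_row hgt.le (by omega) le_rfl
      omega
  have hdμ : d ≤ μ i' := (hI.col_le_shape_pred (by omega)).trans (hI.shape_anti hi' (by omega))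
  have hne' : g i' d ≠ 0 := hI.ne_zero_iff.mpr ⟨hi', by omega, hdμ⟩
  exact ⟨hi', hne', (hI.lt_of_above i' d hi' hi'i (by omega) le_rfl hne').le⟩

theorem mval_floatDiagram_self (hI : IsInsertionState n μ g i x d) (r : ℕ) :
    mval (floatDiagram n g x d) d r = mval (toDiagram n g) d r - if r ≤ n + 1 - x then 1 else 0 :=
  mval_insert_self hI.finite_toDiagram hI.not_mem_toDiagram hI.one_le_col r

theorem mval_floatDiagram_nonneg_of_ne (hI : IsInsertionState n μ g i x d) {c : ℕ} (hc : 1 < c)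
    (hcd : c ≠ d) (r : ℕ) : 0 ≤ mval (floatDiagram n g x d) c r :=
  (hI.mval_toDiagram_nonneg hc r).trans (mval_le_mval_insert hI.finite_toDiagram hcd.symm)

theorem rho_floatDiagram_of_lt (hI : IsInsertionState n μ g i x d) (hlt : bumpCol g i x < d) :
    rho (floatDiagram n g x d) = floatDiagram n g x (d - 1) := by
  have hx := hI.entry_le
  have hb := (hI.bumpCol_spec i x).1
  have hself := hI.mval_floatDiagram_self
  have hnonneg : ∀ r, 0 ≤ mval (toDiagram n g) d r := hI.mval_toDiagram_nonneg (by omega)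
  have hval : mval (floatDiagram n g x d) d (n + 1 - x) = -1 := by
    rw [hself, hI.mval_toDiagram, show n + 1 - (n + 1 - x) = x by omega,
      hI.smallRows_pred_eq hlt, if_pos le_rfl]
    ring
  rw [rho_eq_of_first_neg (c := d) (r := n + 1 - x) (by omega) (by omega) (by omega)
    (fun c' r' hc' hc'd _ => hI.mval_floatDiagram_nonneg_of_ne hc' hc'd.ne r') ?min ?high]
  · simp only [floatDiagram, Set.insert_sdiff_self_of_notMem hI.not_mem_toDiagram]
  case min =>
    intro r' _
    rw [hval, hself]
    have := hnonneg r'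
    split_ifs <;> omega
  case high =>
    intro r' hr'
    rw [hval, hself, if_neg (by omega)]
    have := hnonneg r'
    omega

theorem rho_floatDiagram_of_eq (hI : IsInsertionState n μ g i x d) (hb : bumpCol g i x = d)
    (hy : g i d = 0) : rho (floatDiagram n g x d) = floatDiagram n g x d := by
  refine rho_eq_self fun c r hc hr => ?_
  rcases ne_or_eq c d with hcd | rfl
  · exact hI.mval_floatDiagram_nonneg_of_ne hc hcd r
  rw [hI.mval_floatDiagram_self]
  split_ifs with hrx
  · have hi : i ∈ smallRows g (c - 1) (n + 1 - r) := by
      obtain ⟨hne, hle⟩ := ne_zero_and_le_of_lt_bumpCol (g := g) (i := i) (x := x)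
        (c := c - 1) (by omega) (by omega)
      exact ⟨hI.one_le_row, hne, by omega⟩
    have hsub := Set.ncard_le_ncard (Set.insert_subset hi (hI.smallRows_subset_pred hc _))
      (hI.finite_smallRows _ _)
    rw [Set.ncard_insert_of_notMem (fun h => h.2.1 hy) (hI.finite_smallRows _ _)] at hsub
    rw [hI.mval_toDiagram]
    omega
  · simpa using hI.mval_toDiagram_nonneg hc r

theorem bump (hI : IsInsertionState n μ g i x d) (hb : bumpCol g i x = d) (hy : g i d ≠ 0) :
    IsInsertionState n μ (setEntry g i d x) (i + 1) (g i d) d := by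
  have hd := hI.one_le_col
  have hxy : x < g i d := hb ▸ hI.lt_of_bumpCol_ne_zero (hb ▸ hy)
  have hleft : ∀ c, 1 ≤ c → c < d → g i c ≤ x := fun c hc hcd =>
    (ne_zero_and_le_of_lt_bumpCol hc (hb ▸ hcd)).2
  obtain ⟨-, -, hdμ⟩ := hI.ne_zero_iff.mp hy
  have hssyt : IsSSYT n μ (setEntry g i d x) := by
    refine hI.ssyt.setEntry hy hI.one_le_entry hI.entry_le (fun c hc hcd => hleft c hc (by omega))
      (fun hd' => ?_) (fun i' hi' hi'i => ?_) (fun hd' => ?_)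
    · have hne : g i (d + 1) ≠ 0 := hI.ne_zero_iff.mpr ⟨hI.one_le_row, by omega, hd'⟩
      exact hxy.le.trans (hI.le_of_col_le hd (by omega) hne)
    · exact hI.lt_of_above i' d hi' (by omega) hd le_rfl
        (hI.ne_zero_of_le hy hi' (by omega) hd le_rfl)
    · have hne : g (i + 1) d ≠ 0 := hI.ne_zero_iff.mpr ⟨by omega, hd, hd'⟩
      exact hxy.trans (hI.lt_of_row_lt hI.one_le_row (by omega) hne)
  refine
    { shape_succ_le := hI.shape_succ_le
      shape_eq_zero := hI.shape_eq_zero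
      ssyt := hssyt
      one_le_row := by omega
      one_le_entry := by omega
      entry_le := hI.apply_le i d
      bumpCol_le_col := bumpCol_le hd ?_
      col_le_shape_pred := fun _ => hdμ
      lt_of_above := fun i' c hi' hi'i hc hcd hne => ?_ }
  · rw [show setEntry g i d x (i + 1) d = g (i + 1) d from if_neg (by omega)]
    by_cases hz : g (i + 1) d = 0
    · exact .inl hz
    · exact .inr (hI.lt_of_row_lt hI.one_le_row (by omega) hz)
  · simp only [setEntry] at hne ⊢
    split_ifs at hne ⊢ with hid
    · exact hxy
    · rcases Nat.lt_or_ge i' i with hi'i | hi'i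
      · exact (hI.lt_of_above i' c hi' hi'i hc hcd hne).trans hxy
      · obtain rfl : i' = i := by omega
        exact (hleft c hc (by omega)).trans_lt hxy

theorem iterate_rho_floatDiagram (hI : IsInsertionState n μ g i x d) :
    rho^[d - bumpCol g i x] (floatDiagram n g x d) = floatDiagram n g x (bumpCol g i x) := by
  induction hk : d - bumpCol g i x generalizing d with
  | zero => rw [show d = bumpCol g i x by have := hI.bumpCol_le_col; omega]; rfl
  | succ k ih =>
    rw [Function.iterate_succ_apply, hI.rho_floatDiagram_of_lt (by omega)]
    exact ih (hI.of_le (by omega) (by omega)) (by omega)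

theorem exists_iterate_rho_eq_rskAux {fuel : ℕ} (hI : IsInsertionState n μ g i x d)
    (hfuel : n - x < fuel) :
    ∃ k, rho^[k] (floatDiagram n g x d) = toDiagram n (rskAux fuel g i x) ∧
      rho (toDiagram n (rskAux fuel g i x)) = toDiagram n (rskAux fuel g i x) := by
  induction fuel generalizing g i x d with
  | zero => omega
  | succ fuel ih =>
    have hslide := hI.iterate_rho_floatDiagram
    have hIb := hI.of_le le_rfl hI.bumpCol_le_col
    have hx := hI.entry_le
    rw [rskAux_succ]
    split_ifs with hy
    · rw [← floatDiagram_eq_toDiagram_setEntry hI.one_le_row hI.one_le_entry hx hy]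
      exact ⟨_, hslide, hIb.rho_floatDiagram_of_eq rfl hy⟩
    · have := hI.lt_of_bumpCol_ne_zero hy
      have := hI.apply_le i (bumpCol g i x)
      obtain ⟨k, hk, hfix⟩ := ih (hIb.bump rfl hy) (by omega)
      refine ⟨k + (d - bumpCol g i x), ?_, hfix⟩
      rw [Function.iterate_add_apply, hslide, floatDiagram_eq_floatDiagram_setEntry hI.one_le_row
        hI.one_le_entry hx hy (hI.apply_le _ _), hk]

end IsInsertionState

/-- RSK insertion corresponds to rectification of diagrams. -/
theorem statement14 (n : ℕ) (lam : ℕ → ℕ)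
    (hlam1 : ∀ i, 1 ≤ i → lam (i + 1) ≤ lam i) (hlam2 : ∀ i, n < i → lam i = 0)
    (f : ℕ → ℕ → ℕ) (hf : IsSSYT n lam f) (j : ℕ) (hj1 : 1 ≤ j) (hjn : j ≤ n) :
    toDiagram n (RSKinsert n f j) =
      rectify (insert (lam 1 + 1, n + 1 - j) (toDiagram n f)) := by
  have hT : IsPartitionSSYT n lam f := ⟨hlam1, hlam2, hf⟩
  have hI : IsInsertionState n lam f 1 j (lam 1 + 1) :=
    { hT with
      one_le_row := le_rfl
      one_le_entry := hj1
      entry_le := hjn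
      bumpCol_le_col := bumpCol_le (by omega) (.inl (hT.eq_zero_of_shape_lt (by omega)))
      col_le_shape_pred := by omega
      lt_of_above := by omega }
  obtain ⟨k, hk, hfix⟩ := hI.exists_iterate_rho_eq_rskAux (fuel := n + 1) (by omega)
  exact (rectify_eq_of_iterate hk hfix).symm
end

section
/- Let T be a weak Kohnert diagram that is not a generic Kohnert diagram. Then T has a unique removable column c, and c > 1; moreover, c is characterized by the two conditions: min_r m_T(c, r) = −1, and m_T(i, j) ≥ 0 for every column index i > 1 with i ≠ c and every row index j. In particular, T has a unique highest removable cell and a unique lowest removable cell. -/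
/-!
A diagram is a generic Kohnert diagram exactly when it is finite, has positive cells and satisfies
`m_T(c, r) ≥ 0` for all `c > 1`. Key diagrams satisfy this, and a Kohnert move preserves it because
the moving cell's column is full between its old and new rows and nothing lies to its right.
Conversely, a diagram satisfying it that is not left-justified arises by a Kohnert move from
another such diagram: lift the cell sitting above the rightmost gap to the first free row above
it. Lifting lowers the total depth of the cells below a fixed row bound, so iterating ends at a
left-justified diagram, which is a key diagram.

Compared with `m_{T \ {x}}`, the values of `m_T` are smaller only in column `x.1`, and only by
one. Hence if `T \ {x}` is generic but `T` is not, `m_T ≥ 0` off column `x.1`, `m_T ≥ -1` on it,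
and `m_T` is negative somewhere. Any negative value of `m_T` thus lies in the column of every
removable cell.
-/

attribute [local instance] Classical.propDecidable

noncomputable def colCountAbove (T : Diagram) (c j : ℕ) : ℕ :=
  {p : ℕ × ℕ | p ∈ T ∧ p.1 = c ∧ j ≤ p.2}.ncard

lemma mval_eq_colCountAbove (T : Diagram) (c r : ℕ) :
    mval T c r = colCountAbove T (c - 1) r - colCountAbove T c r := rfl

lemma mval_succ (T : Diagram) (c r : ℕ) :
    mval T (c + 1) r = colCountAbove T c r - colCountAbove T (c + 1) r := rfl

section colCountAbove

variable {T : Diagram}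

lemma colCountAbove_insert (hT : T.Finite) {x : ℕ × ℕ} (hx : x ∉ T) (c j : ℕ) :
    colCountAbove (insert x T) c j =
      colCountAbove T c j + if x.1 = c ∧ j ≤ x.2 then 1 else 0 := by
  unfold colCountAbove
  split_ifs with h
  · rw [← Set.ncard_insert_of_notMem (fun h' => hx h'.1) (hT.subset fun p hp => hp.1)]
    congr 1
    ext p
    simp only [Set.mem_ofPred_eq, Set.mem_insert_iff]
    grind
  · rw [add_zero]
    congr 1
    ext p
    simp only [Set.mem_ofPred_eq, Set.mem_insert_iff]
    grind

lemma colCountAbove_eq_sdiff_add (hT : T.Finite) {x : ℕ × ℕ} (hx : x ∈ T) (c j : ℕ) :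
    colCountAbove T c j =
      colCountAbove (T \ {x}) c j + if x.1 = c ∧ j ≤ x.2 then 1 else 0 := by
  conv_lhs => rw [← Set.insert_sdiff_self_of_mem hx]
  exact colCountAbove_insert (hT.sdiff (t := {x})) (fun h => h.2 rfl) c j

lemma colCountAbove_eq_succ_add (hT : T.Finite) (c j : ℕ) :
    colCountAbove T c j = colCountAbove T c (j + 1) + if (c, j) ∈ T then 1 else 0 := by
  unfold colCountAbove
  split_ifs with h
  · rw [← Set.ncard_insert_of_notMem (a := (c, j)) (by simp) (hT.subset fun p hp => hp.1)]
    congr 1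
    ext ⟨a, b⟩
    simp only [Set.mem_ofPred_eq, Set.mem_insert_iff, Prod.mk.injEq]
    grind
  · rw [add_zero]
    congr 1
    ext ⟨a, b⟩
    simp only [Set.mem_ofPred_eq]
    grind

lemma colCountAbove_le_add (hT : T.Finite) (c j d : ℕ) :
    colCountAbove T c j ≤ colCountAbove T c (j + d) + d := by
  induction d generalizing j with
  | zero => simp
  | succ d ih =>
    have h₁ := colCountAbove_eq_succ_add hT c j
    have h₂ := ih (j + 1)
    rw [show j + 1 + d = j + (d + 1) by omega] at h₂
    split_ifs at h₁ <;> omega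

lemma colCountAbove_eq_add_of_full (hT : T.Finite) {c j d : ℕ}
    (hfull : ∀ s, j ≤ s → s < j + d → (c, s) ∈ T) :
    colCountAbove T c j = colCountAbove T c (j + d) + d := by
  induction d generalizing j with
  | zero => simp
  | succ d ih =>
    have h₁ := colCountAbove_eq_succ_add hT c j
    rw [if_pos (hfull j le_rfl (by omega))] at h₁
    have h₂ := ih (j := j + 1) fun s hs hs' => hfull s (by omega) (by omega)
    rw [show j + 1 + d = j + (d + 1) by omega] at h₂
    omega

lemma mval_insert (hT : T.Finite) {x : ℕ × ℕ} (hx : x ∉ T) (c j : ℕ) :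
    mval (insert x T) c j = mval T c j + (if x.1 = c - 1 ∧ j ≤ x.2 then 1 else 0)
      - (if x.1 = c ∧ j ≤ x.2 then 1 else 0) := by
  simp only [mval_eq_colCountAbove, colCountAbove_insert hT hx]
  push_cast
  ring

lemma mval_sdiff_singleton (hT : T.Finite) {x : ℕ × ℕ} (hx : x ∈ T) (c j : ℕ) :
    mval (T \ {x}) c j = mval T c j - (if x.1 = c - 1 ∧ j ≤ x.2 then 1 else 0)
      + (if x.1 = c ∧ j ≤ x.2 then 1 else 0) := by
  simp only [mval_eq_colCountAbove, colCountAbove_eq_sdiff_add hT hx (c - 1) j,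
    colCountAbove_eq_sdiff_add hT hx c j]
  push_cast
  ring

lemma mval_succ_lt_of_left_full (hT : T.Finite) {c j r : ℕ} (hjr : j ≤ r)
    (hfull : ∀ s, j ≤ s → s ≤ r → (c, s) ∈ T) (hgap : (c + 1, r) ∉ T) :
    mval T (c + 1) (r + 1) < mval T (c + 1) j := by
  obtain ⟨d, rfl⟩ : ∃ d, r = j + d := ⟨r - j, by omega⟩
  have hleft := colCountAbove_eq_add_of_full hT (d := d + 1) fun s h₁ h₂ => hfull s h₁ (by omega)
  have hright := colCountAbove_le_add hT (c + 1) j d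
  have hstep := colCountAbove_eq_succ_add hT (c + 1) (j + d)
  rw [if_neg hgap] at hstep
  rw [show j + (d + 1) = j + d + 1 by omega] at hleft
  rw [mval_succ, mval_succ]
  omega

lemma mval_succ_lt_of_right_full (hT : T.Finite) {c j r : ℕ} (hrj : r < j)
    (hfull : ∀ s, r ≤ s → s < j → (c + 1, s) ∈ T) (hgap : (c, r) ∉ T) :
    mval T (c + 1) r < mval T (c + 1) j := by
  obtain ⟨d, rfl⟩ : ∃ d, j = r + 1 + d := ⟨j - (r + 1), by omega⟩
  have hright := colCountAbove_eq_add_of_full hT (d := d + 1) fun s h₁ h₂ => hfull s h₁ (by omega)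
  have hleft := colCountAbove_le_add hT c (r + 1) d
  have hstep := colCountAbove_eq_succ_add hT c r
  rw [if_neg hgap] at hstep
  rw [show r + (d + 1) = r + 1 + d by omega] at hright
  rw [mval_succ, mval_succ]
  omega

end colCountAbove

def MNonneg (T : Diagram) : Prop := ∀ c r, 1 < c → 1 ≤ r → 0 ≤ mval T c r

structure IsBalanced (T : Diagram) : Prop where
  finite : T.Finite
  pos : ∀ p ∈ T, 1 ≤ p.1 ∧ 1 ≤ p.2
  mNonneg : MNonneg T

lemma MNonneg.moveCell {T : Diagram} (hT : T.Finite) (hM : MNonneg T) {c r r' : ℕ}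
    (hx : (c, r) ∈ T) (hy : (c, r') ∉ T)
    (hdown : ∀ j, r' < j → j ≤ r → 1 ≤ mval T (c + 1) j)
    (hup : ∀ j, r < j → j ≤ r' → 1 ≤ mval T c j) :
    MNonneg (insert (c, r') (T \ {(c, r)})) := by
  intro i j hi hj
  rw [mval_insert hT.sdiff (fun h => hy h.1), mval_sdiff_singleton hT hx]
  have hm := hM i j hi hj
  by_cases hic : i = c
  · subst hic
    have := hup j
    simp only [show i ≠ i - 1 by omega, false_and, if_false, true_and]
    split_ifs <;> omega
  · by_cases hic' : i = c + 1
    · subst hic'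
      have := hdown j
      simp only [add_tsub_cancel_right, true_and, show c ≠ c + 1 by omega, false_and, if_false]
      split_ifs <;> omega
    · simp only [show c ≠ i - 1 by omega, Ne.symm hic, false_and, if_false]
      omega

lemma isBalanced_keyDiagram {a : ℕ → ℕ} (ha : ∃ n, ∀ i, n < i → a i = 0) :
    IsBalanced (keyDiagram a) := by
  obtain ⟨n, hn⟩ := ha
  have hrow : ∀ r, a r ≠ 0 → r ≤ n := fun r hr => by
    by_contra h
    exact hr (hn r (by omega))
  have hfin : (keyDiagram a).Finite := by
    refine ((Set.finite_Icc 1 ((Finset.range (n + 1)).sup a)).prod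
      (Set.finite_Icc 1 n)).subset ?_
    rintro ⟨c, r⟩ ⟨hc, hr, hca : c ≤ a r⟩
    have hrn := hrow r (by omega)
    exact ⟨⟨hc, hca.trans (Finset.le_sup (by simpa [Nat.lt_succ_iff]))⟩, hr, hrn⟩
  refine ⟨hfin, fun p hp => ⟨hp.1, hp.2.1⟩, fun i j hi hj => ?_⟩
  obtain ⟨c, rfl⟩ : ∃ c, i = c + 1 := ⟨i - 1, by omega⟩
  rw [mval_succ, sub_nonneg, Nat.cast_le]
  refine Set.ncard_le_ncard_of_injOn (fun p => (c, p.2)) ?_ ?_ (hfin.subset fun p hp => hp.1)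
  · rintro ⟨c', r⟩ ⟨⟨-, hr, hca : c' ≤ a r⟩, rfl : c' = c + 1, hj⟩
    exact ⟨⟨by omega, hr, by dsimp; omega⟩, rfl, hj⟩
  · rintro ⟨c₁, r₁⟩ ⟨-, rfl, -⟩ ⟨c₂, r₂⟩ ⟨-, rfl, -⟩ h
    simpa using h

lemma KohnertMove.isBalanced {T S : Diagram} (h : KohnertMove T S) (hT : IsBalanced T) :
    IsBalanced S := by
  obtain ⟨c, r, r', hx, hright, hr', hr'r, hy, hfull, rfl⟩ := h
  have hc := (hT.pos _ hx).1
  refine ⟨hT.finite.sdiff.insert _, ?_,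
    hT.mNonneg.moveCell hT.finite hx hy ?_ fun j _ _ => by omega⟩
  · rintro p (rfl | hp)
    exacts [⟨hc, hr'⟩, hT.pos p hp.1]
  · intro j hj hjr
    have hlt := mval_succ_lt_of_left_full hT.finite hjr (c := c)
      (fun s hs hsr => hsr.eq_or_lt.elim (· ▸ hx) (hfull s (by omega)))
      (fun h => by have := hright _ h; omega)
    have := hT.mNonneg (c + 1) (r + 1) (by omega) (by omega)
    omega

lemma GenericKD.isBalanced {T : Diagram} (h : GenericKD T) : IsBalanced T := by
  obtain ⟨a, ha, hKD⟩ := h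
  induction hKD with
  | refl => exact isBalanced_keyDiagram ha
  | tail _ hmove ih => exact hmove.isBalanced ih

lemma Set.eq_Icc_one_sSup {S : Set ℕ} (hS : BddAbove S) (h0 : 0 ∉ S)
    (hdown : ∀ c, 1 ≤ c → c + 1 ∈ S → c ∈ S) : S = Set.Icc 1 (sSup S) := by
  ext c
  refine ⟨fun hc => ⟨Nat.one_le_iff_ne_zero.2 fun h => h0 (h ▸ hc), le_csSup hS hc⟩, ?_⟩
  rintro ⟨hc, hcS⟩
  have hne : S.Nonempty := Set.nonempty_iff_ne_empty.2 fun h => by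
    rw [h, csSup_empty, Nat.bot_eq_zero] at hcS
    omega
  have hdescend : ∀ k, k + c ∈ S → c ∈ S := by
    intro k
    induction k with
    | zero => simp
    | succ k ih => exact fun hk => ih (hdown _ (by omega) (by rwa [add_right_comm]))
  exact hdescend (sSup S - c) (by rw [Nat.sub_add_cancel hcS]; exact Nat.sSup_mem hne hS)

def LeftJustified (T : Diagram) : Prop := ∀ c r, 1 ≤ c → (c + 1, r) ∈ T → (c, r) ∈ T

lemma LeftJustified.genericKD {T : Diagram} (hLJ : LeftJustified T) (hT : T.Finite)
    (hpos : ∀ p ∈ T, 1 ≤ p.1 ∧ 1 ≤ p.2) : GenericKD T := by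
  have hrow : ∀ r, {c | (c, r) ∈ T} = Set.Icc 1 (sSup {c | (c, r) ∈ T}) := fun r =>
    Set.eq_Icc_one_sSup ((hT.preimage fun _ _ _ _ h => (Prod.mk.inj h).1).bddAbove)
      (fun h => by have := (hpos _ h).1; omega) fun c hc h => hLJ c r hc h
  obtain ⟨H, hH⟩ := (hT.image Prod.snd).bddAbove
  refine ⟨fun r => sSup {c | (c, r) ∈ T}, ⟨H, fun r hr => ?_⟩, ?_⟩
  · have hempty : {c | (c, r) ∈ T} = ∅ :=
      Set.eq_empty_of_forall_notMem fun c h => by have := hH ⟨_, h, rfl⟩; dsimp at this; omega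
    dsimp only
    rw [hempty, csSup_empty, Nat.bot_eq_zero]
  · suffices hkey : keyDiagram (fun r => sSup {c | (c, r) ∈ T}) = T by
      show Relation.ReflTransGen KohnertMove _ T
      rw [hkey]
    ext ⟨c, r⟩
    have hc := Set.ext_iff.1 (hrow r) c
    simp only [Set.mem_ofPred_eq, Set.mem_Icc] at hc
    exact ⟨fun ⟨h₁, _, h₃⟩ => hc.2 ⟨h₁, h₃⟩, fun h => ⟨(hpos _ h).1, (hpos _ h).2, (hc.1 h).2⟩⟩

lemma exists_gap_between {T : Diagram} {a s : ℕ} (ha : (a, s) ∉ T) :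
    ∀ c, a < c → (c, s) ∈ T → ∃ b, a ≤ b ∧ b < c ∧ (b + 1, s) ∈ T ∧ (b, s) ∉ T
  | 0, h, _ => absurd h (Nat.not_lt_zero a)
  | c + 1, h, hc => by
    by_cases hc' : (c, s) ∈ T
    · obtain ⟨b, h₁, h₂, h₃, h₄⟩ :=
        exists_gap_between ha c (lt_of_le_of_ne (by omega) fun e => ha (e ▸ hc')) hc'
      exact ⟨b, h₁, by omega, h₃, h₄⟩
    · exact ⟨c, by omega, by omega, hc, hc'⟩

lemma exists_rightmost_gap {T : Diagram} (hT : T.Finite) (hLJ : ¬ LeftJustified T) :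
    ∃ c r, 1 ≤ c ∧ (c + 1, r) ∈ T ∧ (c, r) ∉ T ∧
      ∀ c' r', 1 ≤ c' → (c' + 1, r') ∈ T → (c', r') ∉ T → c' ≤ c := by
  obtain ⟨c, r, hc, h₁, h₂⟩ : ∃ c r, 1 ≤ c ∧ (c + 1, r) ∈ T ∧ (c, r) ∉ T := by
    simpa [LeftJustified] using hLJ
  have hfin : {p : ℕ × ℕ | 1 ≤ p.1 ∧ (p.1 + 1, p.2) ∈ T ∧ p ∉ T}.Finite :=
    (hT.preimage (f := fun p : ℕ × ℕ => (p.1 + 1, p.2)) fun p _ q _ h => by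
      simp only [Prod.mk.injEq, Nat.add_right_cancel_iff] at h
      exact Prod.ext h.1 h.2).subset fun p hp => hp.2.1
  obtain ⟨⟨c, r⟩, ⟨hc, h₁, h₂⟩, hmax⟩ := Set.exists_max_image _ Prod.fst hfin ⟨(c, r), hc, h₁, h₂⟩
  exact ⟨c, r, hc, h₁, h₂, fun c' r' h₁' h₂' h₃' => hmax (c', r') ⟨h₁', h₂', h₃'⟩⟩

lemma exists_first_gap_above {T : Diagram} (hT : T.Finite) (c r : ℕ) :
    ∃ r₀, r < r₀ ∧ (c, r₀) ∉ T ∧ ∀ s, r < s → s < r₀ → (c, s) ∈ T := by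
  obtain ⟨H, hH⟩ := (hT.image Prod.snd).bddAbove
  have hex : ∃ s, r < s ∧ (c, s) ∉ T :=
    ⟨max r H + 1, by omega, fun h => by have := hH ⟨_, h, rfl⟩; dsimp at this; omega⟩
  exact ⟨Nat.find hex, (Nat.find_spec hex).1, (Nat.find_spec hex).2,
    fun s h₁ h₂ => not_not.1 fun h => Nat.find_min hex h₂ ⟨h₁, h⟩⟩

lemma exists_mem_of_mval_succ_pos {T : Diagram} {c j : ℕ} (h : 0 < mval T (c + 1) j) :
    ∃ s, j ≤ s ∧ (c, s) ∈ T := by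
  rw [mval_succ] at h
  obtain ⟨⟨c', s⟩, hs, rfl, hjs⟩ :=
    Set.nonempty_of_ncard_ne_zero (s := {p : ℕ × ℕ | p ∈ T ∧ p.1 = c ∧ j ≤ p.2})
      (by unfold colCountAbove at h; omega)
  exact ⟨s, hjs, hs⟩

noncomputable def rowDistSum (H : ℕ) (T : Diagram) : ℕ := ∑ᶠ p ∈ T, (H - p.2)

lemma rowDistSum_insert_sdiff {T : Diagram} (hT : T.Finite) {x y : ℕ × ℕ} (hx : x ∈ T)
    (hy : y ∉ T) (H : ℕ) :
    rowDistSum H (insert y (T \ {x})) + (H - x.2) = rowDistSum H T + (H - y.2) := by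
  have hy' := finsum_mem_insert (fun p : ℕ × ℕ => H - p.2) (fun h => hy h.1)
    (hT.sdiff (t := {x}))
  have hx' := finsum_mem_insert (fun p : ℕ × ℕ => H - p.2) (a := x) (fun h => h.2 rfl)
    (hT.sdiff (t := {x}))
  rw [Set.insert_sdiff_self_of_mem hx] at hx'
  unfold rowDistSum
  omega

/-- The witness lifts the cell above the rightmost gap to the first free row above it; maximality
of the gap's column makes the lifted cell rightmost in its new row. -/
lemma IsBalanced.exists_kohnertMove_to {T : Diagram} (hB : IsBalanced T) {H : ℕ}
    (hH : ∀ p ∈ T, p.2 ≤ H) (hLJ : ¬ LeftJustified T) :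
    ∃ S, IsBalanced S ∧ (∀ p ∈ S, p.2 ≤ H) ∧ KohnertMove S T ∧
      rowDistSum H S < rowDistSum H T := by
  obtain ⟨c, r, hc, hx, hgap, hmax⟩ := exists_rightmost_gap hB.finite hLJ
  obtain ⟨r₀, hrr₀, hy, hfull⟩ := exists_first_gap_above hB.finite (c + 1) r
  have hr := (hB.pos _ hx).2
  have hup : ∀ j, r < j → j ≤ r₀ → 1 ≤ mval T (c + 1) j := fun j h₁ h₂ => by
    have := mval_succ_lt_of_right_full hB.finite h₁
      (fun s hs₁ hs₂ => hs₁.eq_or_lt.elim (· ▸ hx) (hfull s · (by omega))) hgap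
    have := hB.mNonneg (c + 1) r (by omega) hr
    omega
  obtain ⟨s, hs, hcs⟩ := exists_mem_of_mval_succ_pos (T := T) (c := c) (j := r₀)
    (by have := hup r₀ hrr₀ le_rfl; omega)
  have hr₀H : r₀ ≤ H := hs.trans (hH _ hcs)
  refine ⟨insert (c + 1, r₀) (T \ {(c + 1, r)}), ⟨hB.finite.sdiff.insert _, ?_,
    hB.mNonneg.moveCell hB.finite hx hy (fun j _ _ => by omega) hup⟩, ?_, ?_, ?_⟩
  · rintro p (rfl | hp)
    exacts [⟨by omega, by omega⟩, hB.pos p hp.1]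
  · rintro p (rfl | hp)
    exacts [hr₀H, hH p hp.1]
  · refine ⟨c + 1, r₀, r, Or.inl rfl, ?_, hr, hrr₀, ?_,
      fun s h₁ h₂ => Or.inr ⟨hfull s h₁ h₂, ?_⟩, ?_⟩
    · rintro c' (h | ⟨h, -⟩)
      · exact (Prod.mk.inj h).1.le
      · by_contra hlt
        obtain ⟨b, hb, -, hb₁, hb₂⟩ := exists_gap_between hy c' (by omega) h
        have := hmax b r₀ (by omega) hb₁ hb₂
        omega
    · rintro (h | ⟨-, h⟩)
      · have := (Prod.mk.inj h).2
        omega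
      · exact h rfl
    · simp only [Set.mem_singleton_iff, Prod.mk.injEq, true_and]
      omega
    · rw [Set.insert_sdiff_self_of_notMem (fun h => hy h.1), Set.insert_sdiff_self_of_mem hx]
  · have := rowDistSum_insert_sdiff hB.finite hx hy H
    dsimp at this
    omega

theorem IsBalanced.genericKD_of_le {T : Diagram} (hB : IsBalanced T) {H : ℕ}
    (hH : ∀ p ∈ T, p.2 ≤ H) : GenericKD T := by
  by_cases hLJ : LeftJustified T
  · exact hLJ.genericKD hB.finite hB.pos
  · obtain ⟨S, hS, hSH, hmove, hlt⟩ := hB.exists_kohnertMove_to hH hLJ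
    obtain ⟨a, ha, hKD⟩ := hS.genericKD_of_le hSH
    exact ⟨a, ha, hKD.tail hmove⟩
termination_by rowDistSum H T

theorem genericKD_iff_isBalanced {T : Diagram} : GenericKD T ↔ IsBalanced T := by
  refine ⟨GenericKD.isBalanced, fun hB => ?_⟩
  obtain ⟨H, hH⟩ := (hB.finite.image Prod.snd).bddAbove
  exact hB.genericKD_of_le fun p hp => hH ⟨p, hp, rfl⟩

lemma Set.Finite.existsUnique_max_image_of_injOn {α β : Type*} [LinearOrder β] {s : Set α}
    {f : α → β} (hs : s.Finite) (hne : s.Nonempty) (hinj : Set.InjOn f s) :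
    ∃! x, x ∈ s ∧ ∀ y ∈ s, f y ≤ f x := by
  obtain ⟨x, hx, hmax⟩ := Set.exists_max_image s f hs hne
  exact ⟨x, ⟨hx, hmax⟩, fun y ⟨hy, hymax⟩ => hinj hy hx (le_antisymm (hmax y hy) (hymax x hx))⟩

lemma Set.Finite.existsUnique_min_image_of_injOn {α β : Type*} [LinearOrder β] {s : Set α}
    {f : α → β} (hs : s.Finite) (hne : s.Nonempty) (hinj : Set.InjOn f s) :
    ∃! x, x ∈ s ∧ ∀ y ∈ s, f x ≤ f y :=
  hs.existsUnique_max_image_of_injOn (f := OrderDual.toDual ∘ f) hne hinj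

section Removable

variable {T : Diagram} {x : ℕ × ℕ}

lemma Removable.mval_nonneg (hT : T.Finite) (hx : Removable T x) {i j : ℕ} (hi : 1 < i)
    (hj : 1 ≤ j) (hne : i ≠ x.1) : 0 ≤ mval T i j := by
  have hm := (genericKD_iff_isBalanced.1 hx.2).mNonneg i j hi hj
  rw [mval_sdiff_singleton hT hx.1] at hm
  split_ifs at hm <;> omega

lemma Removable.neg_one_le_mval (hT : T.Finite) (hx : Removable T x) (hx₁ : 1 < x.1) {j : ℕ}
    (hj : 1 ≤ j) : -1 ≤ mval T x.1 j := by
  have hm := (genericKD_iff_isBalanced.1 hx.2).mNonneg x.1 j hx₁ hj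
  rw [mval_sdiff_singleton hT hx.1] at hm
  split_ifs at hm <;> omega

lemma Removable.fst_eq_of_mval_neg (hT : T.Finite) (hx : Removable T x) {i j : ℕ}
    (hi : 1 < i) (hj : 1 ≤ j) (hneg : mval T i j < 0) : x.1 = i := by
  by_contra hne
  exact (hx.mval_nonneg hT hi hj (Ne.symm hne)).not_gt hneg

end Removable

lemma exists_mval_neg_of_not_genericKD {T : Diagram} (hT : T.Finite)
    (hpos : ∀ p ∈ T, 1 ≤ p.1 ∧ 1 ≤ p.2) (hng : ¬ GenericKD T) :
    ∃ i j, 1 < i ∧ 1 ≤ j ∧ mval T i j < 0 := by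
  by_contra h
  push Not at h
  exact hng (genericKD_iff_isBalanced.2 ⟨hT, hpos, h⟩)

/-- A weak but not generic Kohnert diagram has a unique
removable column `c > 1`, characterized by the values of `m_T`, and unique
highest and lowest removable cells. -/
theorem statement15 (T : Diagram) (hfin : T.Finite)
    (hpos : ∀ p ∈ T, 1 ≤ p.1 ∧ 1 ≤ p.2)
    (hweak : WeakKD T) (hng : ¬ GenericKD T) :
    (∃! c, IsRemovableCol T c) ∧
    (∀ c, IsRemovableCol T c → 1 < c) ∧
    (∀ c, 1 < c →
      (IsRemovableCol T c ↔
        ((∃ r, 1 ≤ r ∧ mval T c r = -1) ∧ (∀ r, 1 ≤ r → -1 ≤ mval T c r) ∧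
          ∀ i, 1 < i → i ≠ c → ∀ r, 1 ≤ r → 0 ≤ mval T i r))) ∧
    (∃! x : ℕ × ℕ, Removable T x ∧ ∀ y, Removable T y → y.2 ≤ x.2) ∧
    (∃! x : ℕ × ℕ, Removable T x ∧ ∀ y, Removable T y → x.2 ≤ y.2) := by
  obtain ⟨x₀, hx₀⟩ := hweak
  obtain ⟨i₀, j₀, hi₀, hj₀, hneg⟩ := exists_mval_neg_of_not_genericKD hfin hpos hng
  have hcol : ∀ x, Removable T x → x.1 = i₀ := fun x hx =>
    hx.fst_eq_of_mval_neg hfin hi₀ hj₀ hneg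
  have hR : {x | Removable T x}.Finite := hfin.subset fun x hx => hx.1
  have hinj : Set.InjOn Prod.snd {x | Removable T x} := fun x hx y hy h =>
    Prod.ext ((hcol x hx).trans (hcol y hy).symm) h
  refine ⟨⟨i₀, ⟨x₀, hx₀, hcol x₀ hx₀⟩, fun c ⟨x, hx, hxc⟩ => hxc ▸ hcol x hx⟩,
    fun c ⟨x, hx, hxc⟩ => hxc ▸ hcol x hx ▸ hi₀, fun c hc => ⟨?_, ?_⟩,
    hR.existsUnique_max_image_of_injOn ⟨x₀, hx₀⟩ hinj,
    hR.existsUnique_min_image_of_injOn ⟨x₀, hx₀⟩ hinj⟩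
  · rintro ⟨x, hx, rfl⟩
    have hx₁ : x.1 = i₀ := hcol x hx
    refine ⟨⟨j₀, hj₀, ?_⟩, fun r hr => hx.neg_one_le_mval hfin (hx₁ ▸ hi₀) hr,
      fun i hi hne r hr => hx.mval_nonneg hfin hi hr hne⟩
    have := hx.neg_one_le_mval hfin (hx₁ ▸ hi₀) hj₀
    rw [hx₁] at this ⊢
    omega
  · rintro ⟨⟨r, hr, hm⟩, -, -⟩
    exact ⟨x₀, hx₀, hx₀.fst_eq_of_mval_neg hfin hc hr (by omega)⟩
end
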